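/- Let (Q,I) be a triangular special biserial bound quiver, x a source of Q, P_x the indecomposable projective A-module at x where A = kQ/I. Then the number t(x) of equivalence classes of the relation on arrows starting at x generated by 'α ≈ β whenever α and β are the initial arrows of the two paths of a binomial relation starting at x' equals 1 if P_x is injective and 2 if x is the source of two arrows and P_x is not injective. -/

import Mathlib

open Classical

noncomputable section

/-- A finite quiver: finite sets of vertices and arrows with source and target maps. -/
structure FQuiver where
  V : Type
  A : Type
  [fintV : Fintype V]
  [decV : DecidableEq V]
  [fintA : Fintype A]
  [decA : DecidableEq A]
  src : A → V
  tgt : A → V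

attribute [instance] FQuiver.fintV FQuiver.decV FQuiver.fintA FQuiver.decA

namespace FQuiver

variable {Q : FQuiver}

/-- Oriented paths in a quiver. -/
inductive Path (Q : FQuiver) : Q.V → Q.V → Type
  | nil (v : Q.V) : Path Q v v
  | cons (a : Q.A) {w : Q.V} (p : Path Q (Q.tgt a) w) : Path Q (Q.src a) w

/-- Composition (concatenation) of paths. -/
def Path.comp : ∀ {u v w : Q.V}, Path Q u v → Path Q v w → Path Q u w
  | _, _, _, .nil _, q => q
  | _, _, _, .cons a p, q => .cons a (Path.comp p q)

/-- Length of a path. -/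
def Path.length : ∀ {u v : Q.V}, Path Q u v → ℕ
  | _, _, .nil _ => 0
  | _, _, .cons _ p => Path.length p + 1

/-- The list of arrows of a path, in order. -/
def Path.arrows : ∀ {u v : Q.V}, Path Q u v → List Q.A
  | _, _, .nil _ => []
  | _, _, .cons a p => a :: Path.arrows p

/-- An arrow regarded as a path of length one. -/
def arrow (Q : FQuiver) (a : Q.A) : Path Q (Q.src a) (Q.tgt a) := .cons a (.nil _)

/-- Power of an oriented cycle. -/
def Path.pow {x : Q.V} (c : Path Q x x) : ℕ → Path Q x x
  | 0 => .nil x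
  | n + 1 => c.comp (Path.pow c n)

/-- Transport a path along equalities of its endpoints. -/
def Path.cast {u u' v v' : Q.V} (hu : u = u') (hv : v = v') (p : Path Q u v) :
    Path Q u' v' := by subst hu; subst hv; exact p

/-- The length-two path `ab` formed by two composable arrows. -/
def comp2 (a b : Q.A) (h : Q.src b = Q.tgt a) : Path Q (Q.src a) (Q.tgt b) :=
  (arrow Q a).comp ((arrow Q b).cast h rfl)

/-- The set of all paths of a quiver, bundled with their endpoints. -/
def PathsSigma (Q : FQuiver) : Type := Σ (u : Q.V) (v : Q.V), Path Q u v

/-- The underlying vector space of the path algebra `kQ`: the free `k`-module on paths. -/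
abbrev PAlg (k : Type) [Field k] (Q : FQuiver) : Type := PathsSigma Q →₀ k

/-- The basis vector of `kQ` corresponding to a path. -/
def pvec (k : Type) [Field k] {u v : Q.V} (p : Path Q u v) : PAlg k Q :=
  Finsupp.single ⟨u, v, p⟩ 1

/-- Left multiplication of an element of `kQ` by a path. -/
def lmul (k : Type) [Field k] {u v : Q.V} (p : Path Q u v) (x : PAlg k Q) : PAlg k Q :=
  x.sum fun s c => if h : s.1 = v then c • pvec k (p.comp ((Sigma.snd (Sigma.snd s)).cast h rfl)) else 0

/-- Right multiplication of an element of `kQ` by a path. -/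
def rmul (k : Type) [Field k] {u v : Q.V} (x : PAlg k Q) (p : Path Q u v) : PAlg k Q :=
  x.sum fun s c => if h : s.2.1 = u then c • pvec k (Path.comp ((Sigma.snd (Sigma.snd s)).cast rfl h) p) else 0

/-- The two-sided ideal of `kQ` generated by a set of elements. -/
def idealGen (k : Type) [Field k] (Q : FQuiver) (s : Set (PAlg k Q)) : Submodule k (PAlg k Q) :=
  sInf {M : Submodule k (PAlg k Q) |
    s ⊆ (M : Set (PAlg k Q)) ∧
    ∀ (u v : Q.V) (p : Path Q u v) (x : PAlg k Q), x ∈ M → lmul k p x ∈ M ∧ rmul k x p ∈ M}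

/-- An admissible (two-sided) ideal `(kQ⁺)ᵐ ⊆ I ⊆ (kQ⁺)²` of the path algebra. -/
structure AdmissibleIdeal (k : Type) [Field k] (Q : FQuiver) where
  I : Submodule k (PAlg k Q)
  lmul_mem : ∀ {u v : Q.V} (p : Path Q u v) {x : PAlg k Q}, x ∈ I → lmul k p x ∈ I
  rmul_mem : ∀ {u v : Q.V} (p : Path Q u v) {x : PAlg k Q}, x ∈ I → rmul k x p ∈ I
  bound : ℕ
  two_le_bound : 2 ≤ bound
  pow_le : ∀ {u v : Q.V} (p : Path Q u v), bound ≤ p.length → pvec k p ∈ I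
  le_sq : ∀ x ∈ I, ∀ s ∈ x.support, 2 ≤ (Sigma.snd (Sigma.snd s)).length

/-- A special biserial bound quiver `(Q, I)`. -/
structure SpecialBiserial (k : Type) [Field k] (Q : FQuiver) extends AdmissibleIdeal k Q where
  src_card : ∀ v : Q.V, Fintype.card {a : Q.A // Q.src a = v} ≤ 2
  tgt_card : ∀ v : Q.V, Fintype.card {a : Q.A // Q.tgt a = v} ≤ 2
  unique_succ : ∀ (a b c : Q.A) (hb : Q.src b = Q.tgt a) (hc : Q.src c = Q.tgt a),
      pvec k (comp2 a b hb) ∉ I → pvec k (comp2 a c hc) ∉ I → b = c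
  unique_pred : ∀ (a b c : Q.A) (hb : Q.tgt b = Q.src a) (hc : Q.tgt c = Q.src a),
      pvec k (comp2 b a hb.symm) ∉ I → pvec k (comp2 c a hc.symm) ∉ I → b = c

/-- A binomial relation `u - λv ∈ I` between distinct parallel paths not in `I`. -/
structure BinRel {k : Type} [Field k] {Q : FQuiver} (J : AdmissibleIdeal k Q) where
  s : Q.V
  t : Q.V
  u : Path Q s t
  v : Path Q s t
  coef : k
  coef_ne : coef ≠ 0
  u_ne_v : u ≠ v
  u_not_mem : pvec k u ∉ J.I
  v_not_mem : pvec k v ∉ J.I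
  rel_mem : pvec k u - coef • pvec k v ∈ J.I

/-- `I` is generated by a set of paths (monomial relations) together with the
binomial relations in `R`. -/
def Generates {k : Type} [Field k] {Q : FQuiver} (J : AdmissibleIdeal k Q)
    (R : Set (BinRel J)) : Prop :=
  ∃ P : Set (PathsSigma Q),
    (∀ s ∈ P, pvec k (Sigma.snd (Sigma.snd s)) ∈ J.I) ∧
    J.I = idealGen k Q
      (((fun s : PathsSigma Q => pvec k (Sigma.snd (Sigma.snd s))) '' P) ∪
       ((fun r : BinRel J => pvec k r.u - r.coef • pvec k r.v) '' R))

/-- The ideal `S ⊆ A = kQ/I`: the span of the residue classes of the paths occurring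
in the binomial relations of `R`. -/
def Smod {k : Type} [Field k] {Q : FQuiver} (J : AdmissibleIdeal k Q) (R : Set (BinRel J)) :
    Submodule k (PAlg k Q ⧸ J.I) :=
  Submodule.span k
    ((fun r : BinRel J => (Submodule.Quotient.mk (pvec k r.u) : PAlg k Q ⧸ J.I)) '' R)

/-- Number of connected components of the underlying graph of `Q`. -/
def numComponents (Q : FQuiver) : ℕ :=
  Nat.card (Quot (fun u v : Q.V => ∃ a : Q.A, Q.src a = u ∧ Q.tgt a = v))

/-- A quiver is acyclic (triangular) if it has no nontrivial oriented cycle. -/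
def Acyclic (Q : FQuiver) : Prop := ∀ (x : Q.V) (p : Path Q x x), p.length = 0

/-- A simple cycle: a nontrivial oriented cycle visiting no vertex twice. -/
def IsSimpleCycle {x : Q.V} (p : Path Q x x) : Prop :=
  p.length ≠ 0 ∧ (p.arrows.map Q.src).Nodup

/-- `dim_k S = χ(Q)`, written additively: `dim S + |Q₀| = |Q₁| + N`. -/
def EulerEq {k : Type} [Field k] {Q : FQuiver} (J : AdmissibleIdeal k Q)
    (R : Set (BinRel J)) : Prop :=
  Module.finrank k ↥(Smod J R) + Fintype.card Q.V = Fintype.card Q.A + numComponents Q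

/-- The word in the free group on the arrows determined by a path. -/
def pathWord (Q : FQuiver) {u v : Q.V} (p : Path Q u v) : FreeGroup Q.A :=
  (p.arrows.map FreeGroup.of).prod

/-- `T` is a spanning tree of (the underlying graph of) `Q`. -/
def IsSpanningTree (Q : FQuiver) (T : Set Q.A) : Prop :=
  (∀ u v : Q.V,
      Quot.mk (fun a b : Q.V => ∃ e ∈ T, Q.src e = a ∧ Q.tgt e = b) u =
      Quot.mk (fun a b : Q.V => ∃ e ∈ T, Q.src e = a ∧ Q.tgt e = b) v) ∧
  Nat.card T + 1 = Fintype.card Q.V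

/-- The fundamental group of the bound quiver `(Q, I)` (for connected `Q`,
with respect to a spanning tree `T`): the free group on the arrows modulo the
tree arrows and the homotopy relations coming from the binomial relations. -/
abbrev pi1 {k : Type} [Field k] {Q : FQuiver} (J : AdmissibleIdeal k Q)
    (T : Set Q.A) (R : Set (BinRel J)) : Type :=
  FreeGroup Q.A ⧸ Subgroup.normalClosure
    ((FreeGroup.of '' T) ∪
     ((fun r : BinRel J => pathWord Q r.u * (pathWord Q r.v)⁻¹) '' R))

end FQuiver


namespace FQuiver

/-- There is a binomial relation in `I` starting at `x` whose two paths begin with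
the arrows `al` and `be` respectively. -/
def relLinks {k : Type} [Field k] {Q : FQuiver} (J : AdmissibleIdeal k Q)
    (x : Q.V) (al be : Q.A) : Prop :=
  ∃ (y : Q.V) (u v : Path Q x y) (c : k), c ≠ 0 ∧ u ≠ v ∧
    pvec k u ∉ J.I ∧ pvec k v ∉ J.I ∧ pvec k u - c • pvec k v ∈ J.I ∧
    u.arrows.head? = some al ∧ v.arrows.head? = some be

/-- The number `t(x)` of classes of the equivalence relation on the arrows starting
at `x` generated by "being the initial arrows of the two paths of a binomial
relation starting at `x`". -/
def tClasses {k : Type} [Field k] {Q : FQuiver} (J : AdmissibleIdeal k Q)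
    (x : Q.V) : ℕ :=
  Nat.card (Quot fun al be : {a : Q.A // Q.src a = x} => relLinks J x (↑al) (↑be))

/-- `x` is the source of a binomial relation; for special biserial algebras this is
equivalent to the indecomposable projective `P_x` being injective. -/
def sourceOfBinomial {k : Type} [Field k] {Q : FQuiver} (J : AdmissibleIdeal k Q)
    (x : Q.V) : Prop :=
  ∃ (y : Q.V) (u v : Path Q x y) (c : k), c ≠ 0 ∧ u ≠ v ∧
    pvec k u ∉ J.I ∧ pvec k v ∉ J.I ∧ pvec k u - c • pvec k v ∈ J.I

end FQuiver

/-! A nonzero path of a special biserial bound quiver without oriented cycles is determined by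
its endpoints and its first arrow: each arrow has at most one successor with which it does not
compose to zero, and the path has to stop exactly when it reaches its target. So the two paths
of a binomial relation from `x` start with different arrows, which identifies the at most two
arrows at `x`. -/

theorem card_quot_eq_one_of_rel {α : Type*} [Fintype α] (hα : Fintype.card α ≤ 2)
    {r : α → α → Prop} {a b : α} (hab : a ≠ b) (hr : r a b) : Nat.card (Quot r) = 1 := by
  have : Fintype (Quot r) := Fintype.ofSurjective (Quot.mk r) Quot.mk_surjective
  have hlt := Fintype.card_lt_of_surjective_not_injective (Quot.mk r) Quot.mk_surjective
    fun h => hab (h (Quot.sound hr))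
  have hpos := Fintype.card_pos_iff.2 ⟨Quot.mk r a⟩
  rw [Nat.card_eq_fintype_card]
  omega

theorem card_quot_of_forall_not_rel {α : Type*} {r : α → α → Prop} (h : ∀ a b, ¬ r a b) :
    Nat.card (Quot r) = Nat.card α :=
  Nat.card_congr (Equiv.ofBijective (Quot.mk r)
    ⟨fun _ _ hab => congrArg (Quot.lift id fun _ _ hr => absurd hr (h _ _)) hab,
      Quot.mk_surjective⟩).symm

namespace FQuiver

variable {k : Type} [Field k] {Q : FQuiver}

theorem lmul_pvec {u v w : Q.V} (p : Path Q u v) (q : Path Q v w) :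
    lmul k p (pvec k q) = pvec k (p.comp q) :=
  (Finsupp.sum_single_index (by simp)).trans ((dif_pos rfl).trans (one_smul k _))

theorem rmul_pvec {u v w : Q.V} (p : Path Q u v) (q : Path Q v w) :
    rmul k (pvec k p) q = pvec k (p.comp q) :=
  (Finsupp.sum_single_index (by simp)).trans ((dif_pos rfl).trans (one_smul k _))

theorem AdmissibleIdeal.pvec_comp_mem_left (J : AdmissibleIdeal k Q) {u v w : Q.V}
    (p : Path Q u v) {q : Path Q v w} (hq : pvec k q ∈ J.I) : pvec k (p.comp q) ∈ J.I :=
  lmul_pvec (k := k) p q ▸ J.lmul_mem p hq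

theorem AdmissibleIdeal.pvec_comp_mem_right (J : AdmissibleIdeal k Q) {u v w : Q.V}
    {p : Path Q u v} (hp : pvec k p ∈ J.I) (q : Path Q v w) : pvec k (p.comp q) ∈ J.I :=
  rmul_pvec (k := k) p q ▸ J.rmul_mem q hp

theorem Path.src_of_head?_eq_some {x y : Q.V} (p : Path Q x y) {a : Q.A}
    (h : p.arrows.head? = some a) : Q.src a = x := by
  cases p with
  | nil => simp [Path.arrows] at h
  | cons b p =>
    obtain rfl : b = a := by simpa [Path.arrows] using h
    rfl

theorem Path.exists_eq_comp_of_head?_eq_some {x y : Q.V} (p : Path Q x y) {a : Q.A}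
    (h : p.arrows.head? = some a) :
    ∃ (ha : Q.src a = x) (r : Path Q (Q.tgt a) y), p = ((arrow Q a).cast ha rfl).comp r := by
  cases p with
  | nil => simp [Path.arrows] at h
  | cons b p =>
    obtain rfl : b = a := by simpa [Path.arrows] using h
    exact ⟨rfl, p, rfl⟩

theorem Path.head?_arrows_eq_none_iff (hacyc : Acyclic Q) {x y : Q.V} (p : Path Q x y) :
    p.arrows.head? = none ↔ x = y := by
  cases p with
  | nil => simp [Path.arrows]
  | cons a p =>
    simp only [Path.arrows, List.head?_cons, reduceCtorEq, false_iff]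
    rintro rfl
    simpa [Path.length] using hacyc _ (Path.cons a p)

theorem pvec_comp2_not_mem_of_head?_eq_some {J : AdmissibleIdeal k Q} {a : Q.A} {y : Q.V}
    {p : Path Q (Q.tgt a) y} (hp : pvec k (Path.cons a p) ∉ J.I) {b : Q.A}
    (hb : p.arrows.head? = some b) : ∃ h : Q.src b = Q.tgt a, pvec k (comp2 a b h) ∉ J.I := by
  obtain ⟨h, r, rfl⟩ := p.exists_eq_comp_of_head?_eq_some hb
  exact ⟨h, fun hab => hp (J.pvec_comp_mem_right hab r)⟩

theorem head?_arrows_eq_of_cons_not_mem (SB : SpecialBiserial k Q) (hacyc : Acyclic Q)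
    {a : Q.A} {y : Q.V} {p q : Path Q (Q.tgt a) y} (hp : pvec k (Path.cons a p) ∉ SB.I)
    (hq : pvec k (Path.cons a q) ∉ SB.I) : p.arrows.head? = q.arrows.head? := by
  by_cases hy : Q.tgt a = y
  · rw [(p.head?_arrows_eq_none_iff hacyc).2 hy, (q.head?_arrows_eq_none_iff hacyc).2 hy]
  obtain ⟨b, hb⟩ := Option.ne_none_iff_exists'.1 (mt (p.head?_arrows_eq_none_iff hacyc).1 hy)
  obtain ⟨c, hc⟩ := Option.ne_none_iff_exists'.1 (mt (q.head?_arrows_eq_none_iff hacyc).1 hy)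
  obtain ⟨hab, hab'⟩ := pvec_comp2_not_mem_of_head?_eq_some hp hb
  obtain ⟨hac, hac'⟩ := pvec_comp2_not_mem_of_head?_eq_some hq hc
  rw [hb, hc, SB.unique_succ a b c hab hac hab' hac']

theorem heq_of_head?_arrows_eq (SB : SpecialBiserial k Q) (hacyc : Acyclic Q) :
    ∀ {x x' y : Q.V} (u : Path Q x y) (v : Path Q x' y), pvec k u ∉ SB.I → pvec k v ∉ SB.I →
      u.arrows.head? = v.arrows.head? → HEq u v
  | _, _, _, .nil _, .nil _, _, _, _ => HEq.rfl
  | _, _, _, .nil _, .cons _ _, _, _, h => by simp [Path.arrows] at h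
  | _, _, _, .cons _ _, .nil _, _, _, h => by simp [Path.arrows] at h
  | _, _, _, .cons a p, .cons b q, hu, hv, h => by
    obtain rfl : a = b := by simpa [Path.arrows] using h
    have hpq := heq_of_head?_arrows_eq SB hacyc p q
      (fun hp => hu (SB.toAdmissibleIdeal.pvec_comp_mem_left (arrow Q a) hp))
      (fun hq => hv (SB.toAdmissibleIdeal.pvec_comp_mem_left (arrow Q a) hq))
      (head?_arrows_eq_of_cons_not_mem SB hacyc hu hv)
    rw [eq_of_heq hpq]

theorem exists_relLinks_of_sourceOfBinomial (SB : SpecialBiserial k Q) (hacyc : Acyclic Q)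
    {x : Q.V} (hx : sourceOfBinomial SB.toAdmissibleIdeal x) :
    ∃ a b : Q.A, Q.src a = x ∧ Q.src b = x ∧ a ≠ b ∧ relLinks SB.toAdmissibleIdeal x a b := by
  obtain ⟨y, u, v, c, hc, huv, hu, hv, hrel⟩ := hx
  have hhead : u.arrows.head? ≠ v.arrows.head? := fun h =>
    huv (eq_of_heq (heq_of_head?_arrows_eq SB hacyc u v hu hv h))
  have hxy : x ≠ y := fun hxy => hhead <| by
    rw [(u.head?_arrows_eq_none_iff hacyc).2 hxy, (v.head?_arrows_eq_none_iff hacyc).2 hxy]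
  obtain ⟨a, ha⟩ := Option.ne_none_iff_exists'.1 (mt (u.head?_arrows_eq_none_iff hacyc).1 hxy)
  obtain ⟨b, hb⟩ := Option.ne_none_iff_exists'.1 (mt (v.head?_arrows_eq_none_iff hacyc).1 hxy)
  refine ⟨a, b, u.src_of_head?_eq_some ha, v.src_of_head?_eq_some hb, ?_,
    y, u, v, c, hc, huv, hu, hv, hrel, ha, hb⟩
  rintro rfl
  exact hhead (ha.trans hb.symm)

theorem sourceOfBinomial_of_relLinks {J : AdmissibleIdeal k Q} {x : Q.V} {a b : Q.A}
    (h : relLinks J x a b) : sourceOfBinomial J x :=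
  let ⟨y, u, v, c, hc, huv, hu, hv, hrel, _⟩ := h
  ⟨y, u, v, c, hc, huv, hu, hv, hrel⟩

theorem stmt14_general {k : Type} [Field k] {Q : FQuiver} (SB : SpecialBiserial k Q)
    (hacyc : Acyclic Q) (x : Q.V) :
    (sourceOfBinomial SB.toAdmissibleIdeal x → tClasses SB.toAdmissibleIdeal x = 1) ∧
    ((Fintype.card {a : Q.A // Q.src a = x} = 2 ∧
        ¬ sourceOfBinomial SB.toAdmissibleIdeal x) →
      tClasses SB.toAdmissibleIdeal x = 2) := by
  refine ⟨fun hx => ?_, fun ⟨hcard, hx⟩ => ?_⟩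
  · obtain ⟨a, b, ha, hb, hab, hlink⟩ := exists_relLinks_of_sourceOfBinomial SB hacyc hx
    exact card_quot_eq_one_of_rel (SB.src_card x) (a := ⟨a, ha⟩) (b := ⟨b, hb⟩)
      (fun h => hab (congrArg Subtype.val h)) hlink
  · rw [tClasses, card_quot_of_forall_not_rel fun _ _ h => hx (sourceOfBinomial_of_relLinks h),
      Nat.card_eq_fintype_card, hcard]

/-- for a source `x` of a triangular special biserial bound quiver,
`t(x) = 1` if `P_x` is injective (equivalently, `x` is the source of a binomial
relation), and `t(x) = 2` if `x` is the source of two arrows and `P_x` is not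
injective. -/
theorem stmt14 {k : Type} [Field k] {Q : FQuiver} (SB : SpecialBiserial k Q)
    (hacyc : Acyclic Q) (x : Q.V) (hsource : ∀ a : Q.A, Q.tgt a ≠ x) :
    (sourceOfBinomial SB.toAdmissibleIdeal x → tClasses SB.toAdmissibleIdeal x = 1) ∧
    ((Fintype.card {a : Q.A // Q.src a = x} = 2 ∧
        ¬ sourceOfBinomial SB.toAdmissibleIdeal x) →
      tClasses SB.toAdmissibleIdeal x = 2) :=
  stmt14_general SB hacyc x

end FQuiver
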